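/- arXiv:2504.18743 — 10 statements merged into one kernel-verified Lean document; each statement's English description precedes it below -/
import Mathlib

section
/- For the Bellman operator H of a finite Markov decision process, for all Q1, Q2 : S×A → ℝ and all c ∈ ℝ one has ‖H(Q1) − H(Q2) − c·e‖_∞ ≤ ‖Q1 − Q2 − c·e‖_∞; consequently H is nonexpansive both in the sup-norm, ‖H(Q1) − H(Q2)‖_∞ ≤ ‖Q1 − Q2‖_∞, and in the span seminorm, p_span(H(Q1) − H(Q2)) ≤ p_span(Q1 − Q2). -/
/-- The span seminorm of a vector over a finite nonempty index set:
`p_span(x) = (max_i x_i - min_i x_i) / 2`. -/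
noncomputable def pspan {I : Type*} [Fintype I] [Nonempty I] (x : I → ℝ) : ℝ :=
  ((⨆ i, x i) - ⨅ i, x i) / 2

/-- The sup-norm `‖x‖_∞ = max_i |x_i|`. -/
noncomputable def supNorm {I : Type*} [Fintype I] [Nonempty I] (x : I → ℝ) : ℝ :=
  ⨆ i, |x i|

/-- The Bellman operator of a finite MDP:
`[H(Q)](s,a) = R(s,a) + Σ_{s'} p(s'|s,a) · max_{a'} Q(s',a')`. -/
noncomputable def bellman {S A : Type*} [Fintype S] [Nonempty A]
    (p : S × A → S → ℝ) (R : S × A → ℝ) (Q : S × A → ℝ) : S × A → ℝ :=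
  fun sa => R sa + ∑ s' : S, p sa s' * ⨆ a' : A, Q (s', a')

/-!
Fix `c` and write `K = ‖Q₁ - Q₂ - c e‖_∞`. For every state `s'` the maxima over actions satisfy
`|max Q₁(s', ·) - max Q₂(s', ·) - c| ≤ K`, and since `p(· | s, a)` is a probability vector,
`H(Q₁)(s, a) - H(Q₂)(s, a) - c` is an average of these numbers, hence also bounded by `K`.
Taking `c = 0` gives sup-norm nonexpansiveness; for the span, `p_span(y) ≤ ‖y - c e‖_∞` for every
`c`, with equality when `c` is the midrange of `y`.
-/

lemma abs_ciSup_sub_ciSup_sub_le {ι : Type*} [Finite ι] [Nonempty ι] {f g : ι → ℝ} {c K : ℝ}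
    (h : ∀ i, |f i - g i - c| ≤ K) : |(⨆ i, f i) - (⨆ i, g i) - c| ≤ K := by
  have hf : BddAbove (Set.range f) := (Set.finite_range f).bddAbove
  have hg : BddAbove (Set.range g) := (Set.finite_range g).bddAbove
  rw [abs_le]
  constructor
  · have hg_le : (⨆ i, g i) ≤ (⨆ i, f i) - c + K := ciSup_le fun i => by
      linarith [(abs_le.mp (h i)).1, le_ciSup hf i]
    linarith
  · have hf_le : (⨆ i, f i) ≤ (⨆ i, g i) + c + K := ciSup_le fun i => by
      linarith [(abs_le.mp (h i)).2, le_ciSup hg i]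
    linarith

lemma abs_sum_mul_le_of_sum_eq_one {ι : Type*} {s : Finset ι} {w x : ι → ℝ} {K : ℝ}
    (hw : ∀ i ∈ s, 0 ≤ w i) (hw1 : ∑ i ∈ s, w i = 1) (hx : ∀ i ∈ s, |x i| ≤ K) :
    |∑ i ∈ s, w i * x i| ≤ K :=
  calc |∑ i ∈ s, w i * x i| ≤ ∑ i ∈ s, |w i * x i| := Finset.abs_sum_le_sum_abs _ _
    _ ≤ ∑ i ∈ s, w i * K := Finset.sum_le_sum fun i hi => by
      rw [abs_mul, abs_of_nonneg (hw i hi)]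
      exact mul_le_mul_of_nonneg_left (hx i hi) (hw i hi)
    _ = K := by rw [← Finset.sum_mul, hw1, one_mul]

section Norms

variable {I : Type*} [Fintype I] [Nonempty I]

lemma abs_le_supNorm (x : I → ℝ) (i : I) : |x i| ≤ supNorm x :=
  le_ciSup (f := fun j => |x j|) (Set.finite_range _).bddAbove i

lemma supNorm_le_iff {x : I → ℝ} {K : ℝ} : supNorm x ≤ K ↔ ∀ i, |x i| ≤ K :=
  ciSup_le_iff (Set.finite_range _).bddAbove

lemma pspan_le_supNorm_sub_const (y : I → ℝ) (c : ℝ) : pspan y ≤ supNorm (fun i => y i - c) := by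
  have hy i : |y i - c| ≤ supNorm (fun i => y i - c) := abs_le_supNorm (fun i => y i - c) i
  have hsup : (⨆ i, y i) ≤ c + supNorm (fun i => y i - c) :=
    ciSup_le fun i => by linarith [le_abs_self (y i - c), hy i]
  have hinf : c - supNorm (fun i => y i - c) ≤ ⨅ i, y i :=
    le_ciInf fun i => by linarith [neg_abs_le (y i - c), hy i]
  rw [pspan]
  linarith

lemma supNorm_sub_midrange_le_pspan (y : I → ℝ) :
    supNorm (fun i => y i - ((⨆ j, y j) + ⨅ j, y j) / 2) ≤ pspan y := by
  refine supNorm_le_iff.mpr fun i => abs_le.mpr ⟨?_, ?_⟩ <;>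
  · rw [pspan]
    linarith [le_ciSup (Set.finite_range y).bddAbove i, ciInf_le (Set.finite_range y).bddBelow i]

end Norms

section Bellman

variable {S A : Type*} [Fintype S] [Nonempty A] {p : S × A → S → ℝ} (R : S × A → ℝ)

lemma bellman_sub_bellman_sub_const (hp1 : ∀ sa, ∑ s' : S, p sa s' = 1)
    (Q₁ Q₂ : S × A → ℝ) (c : ℝ) (sa : S × A) :
    bellman p R Q₁ sa - bellman p R Q₂ sa - c =
      ∑ s' : S, p sa s' * ((⨆ a', Q₁ (s', a')) - (⨆ a', Q₂ (s', a')) - c) := by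
  simp only [bellman, mul_sub, Finset.sum_sub_distrib, ← Finset.sum_mul, hp1, one_mul]
  ring

lemma supNorm_bellman_sub_bellman_sub_const_le [Fintype A] [Nonempty S] (hp : ∀ sa s', 0 ≤ p sa s')
    (hp1 : ∀ sa, ∑ s' : S, p sa s' = 1) (Q₁ Q₂ : S × A → ℝ) (c : ℝ) :
    supNorm (fun sa => bellman p R Q₁ sa - bellman p R Q₂ sa - c)
      ≤ supNorm (fun sa => Q₁ sa - Q₂ sa - c) := by
  refine supNorm_le_iff.mpr fun sa => ?_
  rw [bellman_sub_bellman_sub_const R hp1]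
  exact abs_sum_mul_le_of_sum_eq_one (fun s' _ => hp sa s') (hp1 sa) fun s' _ =>
    abs_ciSup_sub_ciSup_sub_le fun a' => abs_le_supNorm (fun sa => Q₁ sa - Q₂ sa - c) (s', a')

end Bellman

/-- The Bellman operator is nonexpansive after any constant shift, hence nonexpansive
in the sup-norm and in the span seminorm. -/
theorem bellman_nonexpansive {S A : Type*} [Fintype S] [Fintype A] [Nonempty S] [Nonempty A]
    (p : S × A → S → ℝ) (R : S × A → ℝ)
    (hp : ∀ sa s', 0 ≤ p sa s') (hp1 : ∀ sa, ∑ s' : S, p sa s' = 1) :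
    ∀ Q1 Q2 : S × A → ℝ,
      (∀ c : ℝ, supNorm (fun sa => bellman p R Q1 sa - bellman p R Q2 sa - c)
          ≤ supNorm (fun sa => Q1 sa - Q2 sa - c)) ∧
      supNorm (bellman p R Q1 - bellman p R Q2) ≤ supNorm (Q1 - Q2) ∧
      pspan (bellman p R Q1 - bellman p R Q2) ≤ pspan (Q1 - Q2) := by
  intro Q1 Q2
  have shifted := supNorm_bellman_sub_bellman_sub_const_le R hp hp1 Q1 Q2
  refine ⟨shifted, by simpa only [sub_zero, ← Pi.sub_apply] using shifted 0, ?_⟩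
  set c := ((⨆ sa, (Q1 - Q2) sa) + ⨅ sa, (Q1 - Q2) sa) / 2
  calc pspan (bellman p R Q1 - bellman p R Q2)
      ≤ supNorm (fun sa => bellman p R Q1 sa - bellman p R Q2 sa - c) :=
        pspan_le_supNorm_sub_const _ c
    _ ≤ supNorm (fun sa => Q1 sa - Q2 sa - c) := shifted c
    _ ≤ pspan (Q1 - Q2) := supNorm_sub_midrange_le_pspan (Q1 - Q2)
end

section
/- Suppose the Bellman operator H of a finite Markov decision process is a span-seminorm contraction with factor β ∈ (0,1), and suppose there exist Q* : S×A → ℝ and r* ∈ ℝ with H(Q*) − Q* = r*·e. Then the three sets {Q* + c·e : c ∈ ℝ}, {Q : H(Q) − Q = r*·e}, and {Q : p_span(H(Q) − Q) = 0} coincide. -/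
/-!
If `H Q - Q` and `H Q* - Q*` are both constant, then `H Q - H Q*` differs from `Q - Q*` by a
constant, so both have the same span and `p_span(Q - Q*) ≤ β p_span(Q - Q*)` with `β < 1` forces
`Q - Q*` to be constant. Conversely, since the rows of `p` sum to one, `H` commutes with adding
constants, so every `Q* + c e` solves `H Q - Q = r* e`.
-/

section pspan

variable {I : Type*} [Fintype I] [Nonempty I]

lemma pspan_nonneg (x : I → ℝ) : 0 ≤ pspan x := by
  obtain ⟨i⟩ := ‹Nonempty I›
  have hsup : x i ≤ ⨆ j, x j := le_ciSup (Finite.bddAbove_range x) i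
  have hinf : ⨅ j, x j ≤ x i := ciInf_le (Finite.bddBelow_range x) i
  unfold pspan
  linarith

lemma pspan_add_const (x : I → ℝ) (c : ℝ) : pspan (fun i => x i + c) = pspan x := by
  unfold pspan
  rw [← ciSup_add (Finite.bddAbove_range x), ← ciInf_add (Finite.bddBelow_range x)]
  ring

lemma pspan_eq_zero_iff (x : I → ℝ) : pspan x = 0 ↔ ∃ c, ∀ i, x i = c := by
  constructor
  · intro h
    refine ⟨⨅ j, x j, fun i => ?_⟩
    have hsup : x i ≤ ⨆ j, x j := le_ciSup (Finite.bddAbove_range x) i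
    have hinf : ⨅ j, x j ≤ x i := ciInf_le (Finite.bddBelow_range x) i
    unfold pspan at h
    linarith
  · rintro ⟨c, hc⟩
    simp only [pspan, hc, ciSup_const, ciInf_const, sub_self, zero_div]

lemma exists_eq_add_const_of_pspan_contraction {T : (I → ℝ) → I → ℝ} {β : ℝ} (hβ : β < 1)
    (hT : ∀ x y, pspan (T x - T y) ≤ β * pspan (x - y)) {x y : I → ℝ} {a b : ℝ}
    (hx : ∀ i, T x i - x i = a) (hy : ∀ i, T y i - y i = b) :
    ∃ c, ∀ i, x i = y i + c := by
  have hTxy : T x - T y = fun i => (x - y) i + (a - b) := by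
    funext i
    have := hx i
    have := hy i
    simp only [Pi.sub_apply]
    linarith
  have hle : pspan (x - y) ≤ β * pspan (x - y) := by
    simpa only [hTxy, pspan_add_const] using hT x y
  have hzero : pspan (x - y) = 0 := by nlinarith [pspan_nonneg (x - y)]
  obtain ⟨c, hc⟩ := (pspan_eq_zero_iff _).1 hzero
  exact ⟨c, fun i => by linarith [hc i, Pi.sub_apply x y i]⟩

end pspan

lemma bellman_add_const {S A : Type*} [Fintype S] [Finite A] [Nonempty A]
    (p : S × A → S → ℝ) (R : S × A → ℝ) (hp1 : ∀ sa, ∑ s' : S, p sa s' = 1)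
    (Q : S × A → ℝ) (c : ℝ) :
    bellman p R (fun sa => Q sa + c) = fun sa => bellman p R Q sa + c := by
  funext sa
  have hsup : ∀ s', ⨆ a', Q (s', a') + c = (⨆ a', Q (s', a')) + c :=
    fun s' => (ciSup_add (Finite.bddAbove_range _) c).symm
  simp only [bellman, hsup, mul_add, Finset.sum_add_distrib, ← Finset.sum_mul, hp1 sa, one_mul,
    add_assoc]

theorem solution_sets_coincide_general {S A : Type*} [Fintype S] [Fintype A] [Nonempty S] [Nonempty A]
    (p : S × A → S → ℝ) (R : S × A → ℝ)
    (hp1 : ∀ sa, ∑ s' : S, p sa s' = 1)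
    (β : ℝ) (hβ1 : β < 1)
    (hcontr : ∀ Q1 Q2 : S × A → ℝ,
      pspan (bellman p R Q1 - bellman p R Q2) ≤ β * pspan (Q1 - Q2))
    (Qstar : S × A → ℝ) (rstar : ℝ)
    (hfix : ∀ sa, bellman p R Qstar sa - Qstar sa = rstar) :
    ({Q : S × A → ℝ | ∃ c : ℝ, Q = fun sa => Qstar sa + c} =
        {Q : S × A → ℝ | ∀ sa, bellman p R Q sa - Q sa = rstar}) ∧
    ({Q : S × A → ℝ | ∃ c : ℝ, Q = fun sa => Qstar sa + c} =
        {Q : S × A → ℝ | pspan (fun sa => bellman p R Q sa - Q sa) = 0}) := by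
  have hshift : ∀ c : ℝ, ∀ sa,
      bellman p R (fun sa => Qstar sa + c) sa - (Qstar sa + c) = rstar := by
    intro c sa
    rw [bellman_add_const p R hp1]
    linarith [hfix sa]
  have hunique : ∀ (Q : S × A → ℝ) (k : ℝ), (∀ sa, bellman p R Q sa - Q sa = k) →
      ∃ c : ℝ, Q = fun sa => Qstar sa + c := fun Q k hQ =>
    (exists_eq_add_const_of_pspan_contraction hβ1 hcontr hQ hfix).imp fun _ => funext
  refine ⟨Set.ext fun Q => ⟨?_, hunique Q rstar⟩, Set.ext fun Q => ⟨?_, fun h => ?_⟩⟩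
  · rintro ⟨c, rfl⟩
    exact hshift c
  · rintro ⟨c, rfl⟩
    exact (pspan_eq_zero_iff _).2 ⟨rstar, hshift c⟩
  · obtain ⟨k, hk⟩ := (pspan_eq_zero_iff _).1 h
    exact hunique Q k hk

/-- If `H` is a span-seminorm contraction with factor `β ∈ (0,1)` and `H(Q*) - Q* = r* e`,
then the sets `{Q* + c e}`, `{Q : H(Q) - Q = r* e}`, and `{Q : p_span(H(Q) - Q) = 0}`
all coincide. -/
theorem solution_sets_coincide {S A : Type*} [Fintype S] [Fintype A] [Nonempty S] [Nonempty A]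
    (p : S × A → S → ℝ) (R : S × A → ℝ)
    (hp : ∀ sa s', 0 ≤ p sa s') (hp1 : ∀ sa, ∑ s' : S, p sa s' = 1)
    (β : ℝ) (hβ0 : 0 < β) (hβ1 : β < 1)
    (hcontr : ∀ Q1 Q2 : S × A → ℝ,
      pspan (bellman p R Q1 - bellman p R Q2) ≤ β * pspan (Q1 - Q2))
    (Qstar : S × A → ℝ) (rstar : ℝ)
    (hfix : ∀ sa, bellman p R Qstar sa - Qstar sa = rstar) :
    ({Q : S × A → ℝ | ∃ c : ℝ, Q = fun sa => Qstar sa + c} =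
        {Q : S × A → ℝ | ∀ sa, bellman p R Q sa - Q sa = rstar}) ∧
    ({Q : S × A → ℝ | ∃ c : ℝ, Q = fun sa => Qstar sa + c} =
        {Q : S × A → ℝ | pspan (fun sa => bellman p R Q sa - Q sa) = 0}) :=
  solution_sets_coincide_general p R hp1 β hβ1 hcontr Qstar rstar hfix
end

section
/- Suppose the Bellman operator H of a finite Markov decision process is a span-seminorm contraction with factor β ∈ (0,1), and let d : S×A → ℝ satisfy 0 < d(s,a) ≤ 1 for all (s,a). Then the asynchronous Bellman operator H̄ satisfies p_span(H̄(Q1) − H̄(Q2)) ≤ (1 − (1 − β)·min_{(s,a)} d(s,a))·p_span(Q1 − Q2) for all Q1, Q2 : S×A → ℝ. -/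
/-- The asynchronous Bellman operator associated with `d`:
`[H̄(Q)](s,a) = (1 - d(s,a))·Q(s,a) + d(s,a)·[H(Q)](s,a)`. -/
noncomputable def asyncBellman {S A : Type*} [Fintype S] [Nonempty A]
    (p : S × A → S → ℝ) (R : S × A → ℝ) (d : S × A → ℝ) (Q : S × A → ℝ) : S × A → ℝ :=
  fun sa => (1 - d sa) * Q sa + d sa * bellman p R Q sa

/-- If `H` is a span-seminorm `β`-contraction and `0 < d(s,a) ≤ 1`, then the asynchronous
Bellman operator `H̄` is a span-seminorm contraction with factor
`1 - (1 - β)·min_{(s,a)} d(s,a)`. -/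
theorem asyncBellman_contraction {S A : Type*} [Fintype S] [Fintype A] [Nonempty S] [Nonempty A]
    (p : S × A → S → ℝ) (R : S × A → ℝ)
    (hp : ∀ sa s', 0 ≤ p sa s') (hp1 : ∀ sa, ∑ s' : S, p sa s' = 1)
    (β : ℝ) (hβ0 : 0 < β) (hβ1 : β < 1)
    (hcontr : ∀ Q1 Q2 : S × A → ℝ,
      pspan (bellman p R Q1 - bellman p R Q2) ≤ β * pspan (Q1 - Q2))
    (d : S × A → ℝ) (hd0 : ∀ sa, 0 < d sa) (hd1 : ∀ sa, d sa ≤ 1) :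
    ∀ Q1 Q2 : S × A → ℝ,
      pspan (asyncBellman p R d Q1 - asyncBellman p R d Q2) ≤
        (1 - (1 - β) * ⨅ sa : S × A, d sa) * pspan (Q1 - Q2) := by
  intro Q1 Q2
  set X : S × A → ℝ := Q1 - Q2 with hX
  set G : S × A → ℝ := bellman p R Q1 - bellman p R Q2 with hG
  set M : ℝ := ⨆ sa, X sa with hM
  set m : ℝ := ⨅ sa, X sa with hm
  set gM : ℝ := ⨆ sa, G sa with hgM
  set gm : ℝ := ⨅ sa, G sa with hgm
  set δ : ℝ := ⨅ sa : S × A, d sa with hδ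
  have hXM : ∀ sa, X sa ≤ M := fun sa => le_ciSup (Set.Finite.bddAbove (Set.finite_range X)) sa
  have hXm : ∀ sa, m ≤ X sa := fun sa => ciInf_le (Set.Finite.bddBelow (Set.finite_range X)) sa
  have hGM : ∀ sa, G sa ≤ gM := fun sa => le_ciSup (Set.Finite.bddAbove (Set.finite_range G)) sa
  have hGm : ∀ sa, gm ≤ G sa := fun sa => ciInf_le (Set.Finite.bddBelow (Set.finite_range G)) sa
  have hδle : ∀ sa, δ ≤ d sa := fun sa => ciInf_le (Set.Finite.bddBelow (Set.finite_range d)) sa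
  have hδ0 : 0 ≤ δ := le_ciInf fun sa => (hd0 sa).le
  -- pointwise bounds on g s' := ⨆ Q1 - ⨆ Q2
  have hgup : ∀ s' : S, (⨆ a' : A, Q1 (s', a')) - (⨆ a' : A, Q2 (s', a')) ≤ M := by
    intro s'
    obtain ⟨a1, ha1⟩ := exists_eq_ciSup_of_finite (f := fun a' : A => Q1 (s', a'))
    have h2 : Q2 (s', a1) ≤ ⨆ a' : A, Q2 (s', a') :=
      le_ciSup (f := fun a' : A => Q2 (s', a')) (Set.Finite.bddAbove (Set.finite_range _)) a1
    have := hXM (s', a1)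
    simp only [hX, Pi.sub_apply] at this
    linarith [ha1 ▸ this]
  have hgdown : ∀ s' : S, m ≤ (⨆ a' : A, Q1 (s', a')) - (⨆ a' : A, Q2 (s', a')) := by
    intro s'
    obtain ⟨a2, ha2⟩ := exists_eq_ciSup_of_finite (f := fun a' : A => Q2 (s', a'))
    have h1 : Q1 (s', a2) ≤ ⨆ a' : A, Q1 (s', a') :=
      le_ciSup (f := fun a' : A => Q1 (s', a')) (Set.Finite.bddAbove (Set.finite_range _)) a2
    have := hXm (s', a2)
    simp only [hX, Pi.sub_apply] at this
    linarith [ha2 ▸ this]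
  -- pointwise bounds on G
  have hGup : ∀ sa, G sa ≤ M := by
    intro sa
    have : G sa = ∑ s' : S, p sa s' * ((⨆ a' : A, Q1 (s', a')) - ⨆ a' : A, Q2 (s', a')) := by
      simp [hG, bellman, bellman, Finset.sum_sub_distrib, mul_sub]
    rw [this]
    calc ∑ s' : S, p sa s' * ((⨆ a' : A, Q1 (s', a')) - ⨆ a' : A, Q2 (s', a'))
        ≤ ∑ s' : S, p sa s' * M :=
          Finset.sum_le_sum fun s' _ => mul_le_mul_of_nonneg_left (hgup s') (hp sa s')
      _ = M := by rw [← Finset.sum_mul, hp1, one_mul]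
  have hGdown : ∀ sa, m ≤ G sa := by
    intro sa
    have : G sa = ∑ s' : S, p sa s' * ((⨆ a' : A, Q1 (s', a')) - ⨆ a' : A, Q2 (s', a')) := by
      simp [hG, bellman, bellman, Finset.sum_sub_distrib, mul_sub]
    rw [this]
    calc m = ∑ s' : S, p sa s' * m := by rw [← Finset.sum_mul, hp1, one_mul]
      _ ≤ ∑ s' : S, p sa s' * ((⨆ a' : A, Q1 (s', a')) - ⨆ a' : A, Q2 (s', a')) :=
          Finset.sum_le_sum fun s' _ => mul_le_mul_of_nonneg_left (hgdown s') (hp sa s')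
  have hgMM : gM ≤ M := ciSup_le hGup
  have hgmm : m ≤ gm := le_ciInf hGdown
  have hMm : m ≤ M := le_trans (hXm (Classical.arbitrary _)) (hXM (Classical.arbitrary _))
  -- span contraction hypothesis unfolded
  have hc : (gM - gm) / 2 ≤ β * ((M - m) / 2) := hcontr Q1 Q2
  -- pointwise bounds on Y := H̄Q1 - H̄Q2
  set Y : S × A → ℝ := asyncBellman p R d Q1 - asyncBellman p R d Q2 with hY
  have hYeq : ∀ sa, Y sa = (1 - d sa) * X sa + d sa * G sa := by
    intro sa
    simp only [hY, hX, hG, Pi.sub_apply, asyncBellman]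
    ring
  have hYup : ∀ sa, Y sa ≤ M + δ * (gM - M) := by
    intro sa
    rw [hYeq]
    have h1 : (1 - d sa) * X sa ≤ (1 - d sa) * M :=
      mul_le_mul_of_nonneg_left (hXM sa) (by linarith [hd1 sa])
    have h2 : d sa * G sa ≤ d sa * gM :=
      mul_le_mul_of_nonneg_left (hGM sa) (hd0 sa).le
    nlinarith [hδle sa, hd0 sa, hd1 sa]
  have hYdown : ∀ sa, m + δ * (gm - m) ≤ Y sa := by
    intro sa
    rw [hYeq]
    have h1 : (1 - d sa) * m ≤ (1 - d sa) * X sa :=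
      mul_le_mul_of_nonneg_left (hXm sa) (by linarith [hd1 sa])
    have h2 : d sa * gm ≤ d sa * G sa :=
      mul_le_mul_of_nonneg_left (hGm sa) (hd0 sa).le
    nlinarith [hδle sa, hd0 sa, hd1 sa]
  have hs : (⨆ sa, Y sa) ≤ M + δ * (gM - M) := ciSup_le hYup
  have hi : m + δ * (gm - m) ≤ ⨅ sa, Y sa := le_ciInf hYdown
  show ((⨆ sa, Y sa) - ⨅ sa, Y sa) / 2 ≤ (1 - (1 - β) * δ) * ((M - m) / 2)
  nlinarith [mul_le_mul_of_nonneg_left hc hδ0]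
end

section
/- Let D̃ : S×A → ℝ satisfy 0 < D̃(s,a) ≤ 1 for all (s,a). Then for all Q1, Q2 : S×A → ℝ and all y = (s0,a0,s1) ∈ S×A×S, the operator F satisfies p_span(F(Q1,D̃,y) − F(Q2,D̃,y)) ≤ (2/D̃(s0,a0))·p_span(Q1 − Q2). -/
/-!
Write `d = Q1 - Q2` with minimum `m` and maximum `M`. Off the sampled pair `(s0, a0)` the
coordinates of `F(Q1) - F(Q2)` are those of `d`, while at `(s0, a0)` the reward cancels and
what remains is `(c - d(s0, a0)) / D̃ + d(s0, a0)`, where `c` is the difference of the two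
maxima at `s1`, again a number in `[m, M]`. Since `1 / D̃ ≥ 1`, all coordinates then lie in
`[M - (M - m) / D̃, m + (M - m) / D̃]`, an interval of length at most `2 (M - m) / D̃`.
-/

open Set

/-- The importance-sampling corrected sample operator `F`: for `y = (s0, a0, s1)`,
`[F(Q,D̃,y)](s,a) = (1{(s0,a0)=(s,a)}/D̃(s,a))·(R(s0,a0) + max_{a'} Q(s1,a') - Q(s0,a0)) + Q(s,a)`. -/
noncomputable def Fop {S A : Type*} [Nonempty A] [DecidableEq S] [DecidableEq A]
    (R : S × A → ℝ) (Q : S × A → ℝ) (Dt : S × A → ℝ) (y : S × A × S) : S × A → ℝ :=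
  fun sa =>
    ((if (y.1, y.2.1) = sa then (1 : ℝ) else 0) / Dt sa) *
        (R (y.1, y.2.1) + (⨆ a' : A, Q (y.2.2, a')) - Q (y.1, y.2.1))
      + Q sa

lemma mem_Icc_ciInf_ciSup {ι : Type*} [Finite ι] (x : ι → ℝ) (i : ι) :
    x i ∈ Icc (⨅ j, x j) (⨆ j, x j) :=
  ⟨ciInf_le (Finite.bddBelow_range x) i, le_ciSup (Finite.bddAbove_range x) i⟩

lemma pspan_le_of_mem_Icc {I : Type*} [Fintype I] [Nonempty I] {x : I → ℝ} {a b : ℝ}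
    (hx : ∀ i, x i ∈ Icc a b) : pspan x ≤ (b - a) / 2 := by
  have hsup : (⨆ i, x i) ≤ b := ciSup_le fun i => (hx i).2
  have hinf : a ≤ ⨅ i, x i := le_ciInf fun i => (hx i).1
  unfold pspan
  linarith

lemma ciSup_sub_ciSup_mem_Icc {ι : Type*} [Finite ι] [Nonempty ι] {f g : ι → ℝ} {m M : ℝ}
    (h : ∀ i, f i - g i ∈ Icc m M) : (⨆ i, f i) - (⨆ i, g i) ∈ Icc m M := by
  have hg : (⨆ i, g i) ≤ (⨆ i, f i) - m := ciSup_le fun i => by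
    linarith [(h i).1, le_ciSup (Finite.bddAbove_range f) i]
  have hf : (⨆ i, f i) ≤ (⨆ i, g i) + M := ciSup_le fun i => by
    linarith [(h i).2, le_ciSup (Finite.bddAbove_range g) i]
  constructor <;> linarith

lemma div_sub_add_mem_Icc {D m M c d : ℝ} (hD0 : 0 < D) (hD1 : D ≤ 1)
    (hc : c ∈ Icc m M) (hd : d ∈ Icc m M) :
    (c - d) / D + d ∈ Icc (M - (M - m) / D) (m + (M - m) / D) := by
  have hupper : (c - d) / D + d = m + (M - m) / D + (c - M - (1 - D) * (d - m)) / D := by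
    field_simp
    ring
  have hlower : (c - d) / D + d = M - (M - m) / D + (c - m + (1 - D) * (M - d)) / D := by
    field_simp
    ring
  have h₁ : 0 ≤ (1 - D) * (d - m) := mul_nonneg (sub_nonneg.2 hD1) (sub_nonneg.2 hd.1)
  have h₂ : 0 ≤ (1 - D) * (M - d) := mul_nonneg (sub_nonneg.2 hD1) (sub_nonneg.2 hd.2)
  constructor
  · rw [hlower, le_add_iff_nonneg_right]
    exact div_nonneg (by linarith [hc.1]) hD0.le
  · rw [hupper, add_le_iff_nonpos_right]
    exact div_nonpos_of_nonpos_of_nonneg (by linarith [hc.2]) hD0.le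

section Fop

variable {S A : Type*} [Nonempty A] [DecidableEq S] [DecidableEq A]
  (R Q1 Q2 Dt : S × A → ℝ) (y : S × A × S)

lemma Fop_sub_Fop_self :
    Fop R Q1 Dt y (y.1, y.2.1) - Fop R Q2 Dt y (y.1, y.2.1) =
      ((⨆ a, Q1 (y.2.2, a)) - (⨆ a, Q2 (y.2.2, a)) - (Q1 (y.1, y.2.1) - Q2 (y.1, y.2.1)))
          / Dt (y.1, y.2.1) + (Q1 (y.1, y.2.1) - Q2 (y.1, y.2.1)) := by
  simp only [Fop, if_true, one_div]
  ring

lemma Fop_sub_Fop_of_ne {sa : S × A} (h : (y.1, y.2.1) ≠ sa) :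
    Fop R Q1 Dt y sa - Fop R Q2 Dt y sa = Q1 sa - Q2 sa := by
  simp only [Fop, if_neg h, zero_div, zero_mul, zero_add]

end Fop

/-- Lipschitz property of `F` in the span seminorm: for `0 < D̃ ≤ 1`,
`p_span(F(Q1,D̃,y) - F(Q2,D̃,y)) ≤ (2/D̃(s0,a0))·p_span(Q1 - Q2)`. -/
theorem Fop_lipschitz {S A : Type*} [Fintype S] [Fintype A] [Nonempty S] [Nonempty A]
    [DecidableEq S] [DecidableEq A] (R : S × A → ℝ)
    (Dt : S × A → ℝ) (hD0 : ∀ sa, 0 < Dt sa) (hD1 : ∀ sa, Dt sa ≤ 1) :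
    ∀ (Q1 Q2 : S × A → ℝ) (y : S × A × S),
      pspan (fun sa => Fop (A := A) R Q1 Dt y sa - Fop (A := A) R Q2 Dt y sa)
        ≤ (2 / Dt (y.1, y.2.1)) * pspan (fun sa => Q1 sa - Q2 sa) := by
  intro Q1 Q2 y
  set D := Dt (y.1, y.2.1)
  set m := ⨅ sa, Q1 sa - Q2 sa
  set M := ⨆ sa, Q1 sa - Q2 sa
  have hd : ∀ sa, Q1 sa - Q2 sa ∈ Icc m M := mem_Icc_ciInf_ciSup _
  have hc : (⨆ a, Q1 (y.2.2, a)) - (⨆ a, Q2 (y.2.2, a)) ∈ Icc m M :=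
    ciSup_sub_ciSup_mem_Icc fun a => hd _
  have hmM : m ≤ M := (hd (y.1, y.2.1)).1.trans (hd (y.1, y.2.1)).2
  have hK : M - m ≤ (M - m) / D := le_div_self (sub_nonneg.2 hmM) (hD0 _) (hD1 _)
  have hF : ∀ sa, Fop R Q1 Dt y sa - Fop R Q2 Dt y sa ∈
      Icc (M - (M - m) / D) (m + (M - m) / D) := by
    intro sa
    by_cases h : (y.1, y.2.1) = sa
    · subst h
      rw [Fop_sub_Fop_self]
      exact div_sub_add_mem_Icc (hD0 _) (hD1 _) hc (hd _)
    · rw [Fop_sub_Fop_of_ne R Q1 Q2 Dt y h]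
      constructor <;> linarith [(hd sa).1, (hd sa).2]
  calc _ ≤ (m + (M - m) / D - (M - (M - m) / D)) / 2 := pspan_le_of_mem_Icc hF
    _ ≤ (M - m) / D := by linarith
    _ = 2 / D * pspan (fun sa => Q1 sa - Q2 sa) := by unfold pspan; ring
end

section
/- Let D̃ : S×A → ℝ satisfy 0 < D̃(s,a) ≤ 1 for all (s,a), and suppose |R(s,a)| ≤ 1 for all (s,a). Then for every Q : S×A → ℝ and every y = (s0,a0,s1) ∈ S×A×S, the operator F satisfies p_span(F(Q,D̃,y)) ≤ (2/D̃(s0,a0))·(p_span(Q) + 1). -/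
/-
The sample perturbs `Q` only at `(s0, a0)`, by `δ / D̃(s0, a0)` with
`δ = R(s0,a0) + max_{a'} Q(s1,a') - Q(s0,a0)`. Changing one coordinate by `c` raises the span
by at most `|c| / 2`, and `|δ| ≤ 1 + 2 p_span(Q)` because `δ - R(s0,a0)` is a difference of two
entries of `Q`. Hence `p_span(F) ≤ p_span(Q) + (2 p_span(Q) + 1) / (2 D̃(s0,a0))`, which is
below the claimed bound since `D̃(s0,a0) ≤ 1`.
-/

section Span

variable {I : Type*} [Fintype I] [Nonempty I]

lemma pspan_le_of_bounds {x : I → ℝ} {m M : ℝ} (hm : ∀ i, m ≤ x i)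
    (hM : ∀ i, x i ≤ M) : pspan x ≤ (M - m) / 2 := by
  have hsup : (⨆ i, x i) ≤ M := ciSup_le hM
  have hinf : m ≤ ⨅ i, x i := le_ciInf hm
  unfold pspan
  linarith

lemma abs_sub_le_two_mul_pspan (x : I → ℝ) (i j : I) : |x i - x j| ≤ 2 * pspan x := by
  have hbdd := Set.finite_range x
  have hsup : ∀ k, x k ≤ ⨆ i, x i := le_ciSup hbdd.bddAbove
  have hinf : ∀ k, (⨅ i, x i) ≤ x k := ciInf_le hbdd.bddBelow
  unfold pspan
  rw [abs_sub_le_iff]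
  constructor <;> linarith [hsup i, hsup j, hinf i, hinf j]

lemma pspan_add_le (x y : I → ℝ) : pspan (x + y) ≤ pspan x + pspan y := by
  have hx := Set.finite_range x
  have hy := Set.finite_range y
  have hsup : (⨆ i, (x + y) i) ≤ (⨆ i, x i) + ⨆ i, y i :=
    ciSup_le fun i => add_le_add (le_ciSup hx.bddAbove i) (le_ciSup hy.bddAbove i)
  have hinf : (⨅ i, x i) + (⨅ i, y i) ≤ ⨅ i, (x + y) i :=
    le_ciInf fun i => add_le_add (ciInf_le hx.bddBelow i) (ciInf_le hy.bddBelow i)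
  unfold pspan
  linarith

lemma pspan_single_le [DecidableEq I] (i : I) (c : ℝ) : pspan (Pi.single i c) ≤ |c| / 2 := by
  have hbounds : ∀ j, min 0 c ≤ (Pi.single i c : I → ℝ) j ∧
      (Pi.single i c : I → ℝ) j ≤ max 0 c := by
    intro j
    rcases eq_or_ne j i with rfl | hj
    · simp
    · simp [hj]
  calc pspan (Pi.single i c) ≤ (max 0 c - min 0 c) / 2 :=
        pspan_le_of_bounds (fun j => (hbounds j).1) (fun j => (hbounds j).2)
    _ = |c| / 2 := by rw [max_sub_min_eq_abs, sub_zero]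

end Span

lemma Fop_eq_add_single {S A : Type*} [Nonempty A] [DecidableEq S] [DecidableEq A]
    (R Q Dt : S × A → ℝ) (y : S × A × S) :
    Fop R Q Dt y = Q + Pi.single (y.1, y.2.1)
      ((R (y.1, y.2.1) + (⨆ a' : A, Q (y.2.2, a')) - Q (y.1, y.2.1)) / Dt (y.1, y.2.1)) := by
  funext sa
  rcases eq_or_ne (y.1, y.2.1) sa with rfl | hsa
  · simp [Fop, inv_mul_eq_div, add_comm]
  · simp [Fop, hsa, Ne.symm hsa]

lemma abs_reward_add_ciSup_sub_le {S A : Type*} [Fintype S] [Fintype A] [Nonempty S]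
    [Nonempty A] (R Q : S × A → ℝ) (hR : ∀ sa, |R sa| ≤ 1) (s0 : S) (a0 : A) (s1 : S) :
    |R (s0, a0) + (⨆ a', Q (s1, a')) - Q (s0, a0)| ≤ 2 * pspan Q + 1 := by
  obtain ⟨a1, ha1⟩ := exists_eq_ciSup_of_finite (f := fun a' => Q (s1, a'))
  rw [← ha1, add_sub_assoc, add_comm (2 * pspan Q)]
  exact (abs_add_le _ _).trans
    (add_le_add (hR _) (abs_sub_le_two_mul_pspan Q (s1, a1) (s0, a0)))

/-- At-most-affine growth of `F` in the span seminorm: for `0 < D̃ ≤ 1` and `|R| ≤ 1`,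
`p_span(F(Q,D̃,y)) ≤ (2/D̃(s0,a0))·(p_span(Q) + 1)`. -/
theorem Fop_growth {S A : Type*} [Fintype S] [Fintype A] [Nonempty S] [Nonempty A]
    [DecidableEq S] [DecidableEq A] (R : S × A → ℝ) (hR : ∀ sa, |R sa| ≤ 1)
    (Dt : S × A → ℝ) (hD0 : ∀ sa, 0 < Dt sa) (hD1 : ∀ sa, Dt sa ≤ 1) :
    ∀ (Q : S × A → ℝ) (y : S × A × S),
      pspan (Fop (A := A) R Q Dt y) ≤ (2 / Dt (y.1, y.2.1)) * (pspan Q + 1) := by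
  rintro Q ⟨s0, a0, s1⟩
  set d := Dt (s0, a0)
  set p := pspan Q
  set δ := R (s0, a0) + (⨆ a', Q (s1, a')) - Q (s0, a0)
  have hd0 : 0 < d := hD0 _
  have hp : 0 ≤ p := pspan_nonneg Q
  have hδ : |δ| ≤ 2 * p + 1 := abs_reward_add_ciSup_sub_le R Q hR s0 a0 s1
  have hF : pspan (Fop R Q Dt (s0, a0, s1)) ≤ p + (2 * p + 1) / d / 2 :=
    calc pspan (Fop R Q Dt (s0, a0, s1)) ≤ p + pspan (Pi.single (s0, a0) (δ / d)) := by
          rw [Fop_eq_add_single]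
          exact pspan_add_le _ _
      _ ≤ p + |δ / d| / 2 := by gcongr; exact pspan_single_le _ _
      _ ≤ p + (2 * p + 1) / d / 2 := by
          rw [abs_div, abs_of_pos hd0]
          gcongr
  have hpd : p * d ≤ p := mul_le_of_le_one_right hp (hD1 _)
  calc pspan (Fop R Q Dt (s0, a0, s1)) ≤ p + (2 * p + 1) / d / 2 := hF
    _ = (p * d + (2 * p + 1) / 2) / d := by field_simp
    _ ≤ 2 * (p + 1) / d := by gcongr; linarith
    _ = 2 / d * (p + 1) := by ring
end

section
/- Let d : S×A → ℝ satisfy d(s,a) > 0 for all (s,a) and Σ_{(s,a)} d(s,a) = 1. Then for every Q : S×A → ℝ, Σ_{(s0,a0,s1) ∈ S×A×S} d(s0,a0)·p(s1|s0,a0)·F(Q,d,(s0,a0,s1)) = H(Q), i.e., the average of F(Q,d,·) under the distribution ν(s0,a0,s1) = d(s0,a0)·p(s1|s0,a0) equals the Bellman operator applied to Q. -/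
/-!
Write `δ(sa', s') = R sa' + max_{a'} Q(s', a') - Q sa'` for the temporal-difference error, so that
`F(Q, d, (sa', s')) sa = 1{sa' = sa} / d sa · δ(sa', s') + Q sa`. Under `ν = d ⊗ p` the constant
`Q sa` averages to itself, while the importance weight `1 / d sa` cancels the probability `d sa`
of drawing `sa' = sa`, leaving `∑_{s'} p(s' | sa) δ(sa, s') = H(Q)(sa) - Q(sa)`.
-/

open Finset

theorem Fintype.sum_prod_assoc_eq {α β γ M : Type*} [Fintype α] [Fintype β] [Fintype γ]
    [AddCommMonoid M] (f : α × β × γ → M) :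
    ∑ y, f y = ∑ x : α × β, ∑ c, f (x.1, x.2, c) := by
  rw [← (Equiv.prodAssoc α β γ).sum_comp, Fintype.sum_prod_type]
  rfl

theorem sum_sum_mul_of_sum_eq_one {α β K : Type*} [Fintype α] [Fintype β] [CommSemiring K]
    (f : α → K) (g : α → β → K) (hg : ∀ a, ∑ b, g a b = 1) :
    ∑ a, ∑ b, f a * g a b = ∑ a, f a := by
  simp only [← mul_sum, hg, mul_one]

theorem sum_sum_mul_ite_div_mul {α β K : Type*} [Fintype α] [Fintype β] [DecidableEq α]
    [Field K] (f : α → K) (g h : α → β → K) {a₀ : α} (hf : f a₀ ≠ 0) :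
    ∑ a, ∑ b, f a * g a b * ((if a = a₀ then 1 else 0) / f a₀ * h a b)
      = ∑ b, g a₀ b * h a₀ b := by
  rw [Fintype.sum_eq_single a₀ fun a ha => by simp [ha]]
  refine sum_congr rfl fun b _ => ?_
  simp only [if_true]
  field_simp

theorem sum_mul_add_sub_of_sum_eq_one {ι K : Type*} [Fintype ι] [CommRing K] (w x : ι → K)
    (a b : K) (hw : ∑ i, w i = 1) :
    ∑ i, w i * (a + x i - b) = a + ∑ i, w i * x i - b := by
  simp only [mul_sub, mul_add, sum_add_distrib, sum_sub_distrib, ← sum_mul, hw, one_mul]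

theorem Fop_mean_eq_bellman_general {S A : Type*} [Fintype S] [Fintype A] [Nonempty A]
    [DecidableEq S] [DecidableEq A]
    (p : S × A → S → ℝ) (R : S × A → ℝ)
    (hp1 : ∀ sa, ∑ s' : S, p sa s' = 1)
    (d : S × A → ℝ) (hd0 : ∀ sa, 0 < d sa) (hdsum : ∑ sa : S × A, d sa = 1) :
    ∀ (Q : S × A → ℝ) (sa : S × A),
      ∑ y : S × A × S, d (y.1, y.2.1) * p (y.1, y.2.1) y.2.2 * Fop (A := A) R Q d y sa
        = bellman p R Q sa := by
  intro Q sa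
  calc _ = ∑ x : S × A, ∑ s', d x * p x s' *
          ((if x = sa then 1 else 0) / d sa * (R x + (⨆ a', Q (s', a')) - Q x) + Q sa) := by
        rw [Fintype.sum_prod_assoc_eq]
        rfl
    _ = ∑ s', p sa s' * (R sa + (⨆ a', Q (s', a')) - Q sa) + Q sa := by
        simp only [mul_add, sum_add_distrib, ← sum_mul,
          sum_sum_mul_ite_div_mul d p _ (hd0 sa).ne', sum_sum_mul_of_sum_eq_one d p hp1, hdsum,
          one_mul]
    _ = bellman p R Q sa := by
        rw [sum_mul_add_sub_of_sum_eq_one _ _ _ _ (hp1 sa), sub_add_cancel]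
        rfl

/-- Averaging `F(Q,d,·)` under `ν(s0,a0,s1) = d(s0,a0)·p(s1|s0,a0)` gives exactly the
Bellman operator `H(Q)`. -/
theorem Fop_mean_eq_bellman {S A : Type*} [Fintype S] [Fintype A] [Nonempty S] [Nonempty A]
    [DecidableEq S] [DecidableEq A]
    (p : S × A → S → ℝ) (R : S × A → ℝ)
    (hp : ∀ sa s', 0 ≤ p sa s') (hp1 : ∀ sa, ∑ s' : S, p sa s' = 1)
    (d : S × A → ℝ) (hd0 : ∀ sa, 0 < d sa) (hdsum : ∑ sa : S × A, d sa = 1) :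
    ∀ (Q : S × A → ℝ) (sa : S × A),
      ∑ y : S × A × S, d (y.1, y.2.1) * p (y.1, y.2.1) y.2.2 * Fop (A := A) R Q d y sa
        = bellman p R Q sa :=
  Fop_mean_eq_bellman_general p R hp1 d hd0 hdsum
end

section
/- Suppose |R(s,a)| ≤ 1 for all (s,a). Let Q : S×A → ℝ, (s0,a0) ∈ S×A, s1 ∈ S, α̃ ∈ [0,1], and c ∈ ℝ, and define Q' : S×A → ℝ by Q'(s,a) = Q(s,a) + α̃·1{(s,a)=(s0,a0)}·(R(s0,a0) + max_{a'∈A} Q(s1,a') − Q(s0,a0)) + c. Then p_span(Q') ≤ p_span(Q) + α̃. -/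
/-- One asynchronous Q-learning update (with a constant shift `c`) increases the span
seminorm by at most the stepsize: `p_span(Q') ≤ p_span(Q) + α̃`. -/
theorem span_one_step_growth {S A : Type*} [Fintype S] [Fintype A] [Nonempty S] [Nonempty A]
    [DecidableEq S] [DecidableEq A]
    (R : S × A → ℝ) (hR : ∀ sa, |R sa| ≤ 1)
    (Q : S × A → ℝ) (s0 : S) (a0 : A) (s1 : S)
    (αt : ℝ) (hα0 : 0 ≤ αt) (hα1 : αt ≤ 1) (c : ℝ) :
    pspan (fun sa : S × A =>
        Q sa + αt * (if sa = (s0, a0) then (1 : ℝ) else 0) *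
            (R (s0, a0) + (⨆ a' : A, Q (s1, a')) - Q (s0, a0))
          + c)
      ≤ pspan Q + αt := by
  set M := ⨆ sa, Q sa with hM
  set m := ⨅ sa, Q sa with hm
  set V := ⨆ a' : A, Q (s1, a') with hV
  set Q' : S × A → ℝ := fun sa : S × A =>
        Q sa + αt * (if sa = (s0, a0) then (1 : ℝ) else 0) *
            (R (s0, a0) + V - Q (s0, a0)) + c with hQ'
  have hub : ∀ sa, Q sa ≤ M := fun sa => le_ciSup (Set.Finite.bddAbove (Set.finite_range Q)) sa
  have hlb : ∀ sa, m ≤ Q sa := fun sa => ciInf_le (Set.Finite.bddBelow (Set.finite_range Q)) sa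
  have hVM : V ≤ M := ciSup_le fun a' => hub (s1, a')
  have hmV : m ≤ V := le_trans (hlb (s1, Classical.arbitrary A))
    (le_ciSup (Set.Finite.bddAbove (Set.finite_range (fun a' => Q (s1, a')))) (Classical.arbitrary A))
  have hR1 := abs_le.1 (hR (s0, a0))
  have hup : ∀ sa, Q' sa ≤ M + αt + c := by
    intro sa
    simp only [hQ']
    by_cases h : sa = (s0, a0)
    · subst h; simp only [if_pos rfl, if_true]
      nlinarith [mul_nonneg (sub_nonneg.2 hα1) (sub_nonneg.2 (hub (s0, a0))),
        mul_nonneg hα0 (sub_nonneg.2 hR1.2), mul_nonneg hα0 (sub_nonneg.2 hVM)]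
    · simp only [if_neg h]
      have := hub sa; linarith
  have hdown : ∀ sa, m - αt + c ≤ Q' sa := by
    intro sa
    simp only [hQ']
    by_cases h : sa = (s0, a0)
    · subst h; simp only [if_pos rfl, if_true]
      nlinarith [mul_nonneg (sub_nonneg.2 hα1) (sub_nonneg.2 (hlb (s0, a0))),
        mul_nonneg hα0 (sub_nonneg.2 hR1.1), mul_nonneg hα0 (sub_nonneg.2 hmV)]
    · simp only [if_neg h]
      have := hlb sa; linarith
  have hsup : (⨆ sa, Q' sa) ≤ M + αt + c := ciSup_le hup
  have hinf : m - αt + c ≤ ⨅ sa, Q' sa := le_ciInf hdown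
  simp only [pspan]
  have : ((⨆ sa, Q' sa) - ⨅ sa, Q' sa) / 2 ≤ (M - m) / 2 + αt := by linarith
  exact this
end

section
/- Consider the generic asynchronous Q-learning iteration with adaptive stepsizes: given sequences (s_k, a_k)_{k≥1} in S×A, (s'_k)_{k≥1} in S, shifts (c_k)_{k≥1} in ℝ, constants α > 0 and h > 0 with α ≤ 1 + h, reward |R(s,a)| ≤ 1 for all (s,a), and an initial Q_1 : S×A → ℝ, define N_k(s,a) = Σ_{i=1}^k 1{(s_i,a_i)=(s,a)} and Q_{k+1}(s,a) = Q_k(s,a) + (α/(N_k(s,a)+h))·1{(s,a)=(s_k,a_k)}·(R(s_k,a_k) + max_{a'∈A} Q_k(s'_k,a') − Q_k(s_k,a_k)) + c_k. Then for every k ≥ 1, p_span(Q_k) ≤ p_span(Q_1) + α·|S|·|A|·log((⌈(k−1)/(|S|·|A|)⌉ + h)/h). -/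
/-- The number of visits `N_k(s,a) = Σ_{i=1}^k 1{(s_i,a_i) = (s,a)}` of a state-action
trajectory to the pair `(s,a)` during the first `k` iterations. -/
def visits {S A : Type*} [DecidableEq S] [DecidableEq A]
    (sa : ℕ → S × A) (k : ℕ) (q : S × A) : ℕ :=
  ((Finset.Icc 1 k).filter (fun i => sa i = q)).card

/-!
An update moves the visited coordinate of `Q` to a convex combination, with weight
`β = α / (N + h) ≤ 1`, of its old value and a target `R + max_a' Q(s', a')` lying within
distance `1` of the range of `Q`, and then shifts every coordinate by `c`; so the span grows
by at most `β` per step. Since `1 / (n + h) ≤ log ((n + h) / (n - 1 + h))`, these increments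
are dominated by those of the potential `α ∑_{(s,a)} log ((N_k(s,a) + h) / h)`, and by
concavity of `log`, together with `∑_{(s,a)} N_k(s,a) = k`, the potential is at most
`α |S| |A| log ((k / (|S| |A|) + h) / h)`.
-/

open Finset Real

lemma inv_add_one_le_log_add_one_sub_log {y : ℝ} (hy : 0 < y) :
    (y + 1)⁻¹ ≤ log (y + 1) - log y := by
  have := one_sub_inv_le_log_of_pos (x := (y + 1) / y) (by positivity)
  rw [log_div (by positivity) hy.ne', inv_div] at this
  calc (y + 1)⁻¹ = 1 - y / (y + 1) := by field_simp; ring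
    _ ≤ _ := this

lemma sum_log_le_card_mul_log_average {ι : Type*} {s : Finset ι} (hs : s.Nonempty)
    {p : ι → ℝ} (hp : ∀ i ∈ s, 0 < p i) :
    ∑ i ∈ s, log (p i) ≤ #s * log ((∑ i ∈ s, p i) / #s) := by
  have hcard : (0 : ℝ) < #s := by exact_mod_cast hs.card_pos
  have := strictConcaveOn_log_Ioi.concaveOn.le_map_sum (t := s) (w := fun _ => (#s : ℝ)⁻¹)
    (p := p) (fun _ _ => by positivity) (by simp [hcard.ne']) hp
  simp only [smul_eq_mul, ← mul_sum] at this
  rwa [inv_mul_eq_div, inv_mul_eq_div, div_le_iff₀' hcard] at this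

lemma ciSup_comp_mem_Icc {ι κ : Type*} [Finite ι] [Nonempty κ] (f : ι → ℝ) (g : κ → ι) :
    ⨆ k, f (g k) ∈ Set.Icc (⨅ i, f i) (⨆ i, f i) := by
  obtain ⟨k⟩ := ‹Nonempty κ›
  refine ⟨(ciInf_le (Finite.bddBelow_range f) (g k)).trans ?_,
    ciSup_le fun k => le_ciSup (Finite.bddAbove_range f) (g k)⟩
  exact le_ciSup ((Finite.bddAbove_range f).mono (Set.range_comp_subset_range g f)) k

section Span

variable {I : Type*} [Fintype I] [Nonempty I]

lemma pspan_le_of_forall_mem_Icc {x : I → ℝ} {m M : ℝ} (hx : ∀ i, x i ∈ Set.Icc m M) :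
    pspan x ≤ (M - m) / 2 := by
  have hM : ⨆ i, x i ≤ M := ciSup_le fun i => (hx i).2
  have hm : m ≤ ⨅ i, x i := le_ciInf fun i => (hx i).1
  rw [pspan]
  linarith

lemma pspan_update_le [DecidableEq I] {x y β : I → ℝ} {p : I} {t c : ℝ}
    (hβ : β p ∈ Set.Icc 0 1) (ht : t ∈ Set.Icc ((⨅ i, x i) - 1) ((⨆ i, x i) + 1))
    (hy : ∀ i, y i = x i + β i * (if i = p then 1 else 0) * (t - x p) + c) :
    pspan y ≤ pspan x + β p := by
  have hy_mem : ∀ i, y i ∈ Set.Icc ((⨅ i, x i) - β p + c) ((⨆ i, x i) + β p + c) := by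
    intro i
    have hxl : ⨅ i, x i ≤ x i := ciInf_le (Finite.bddBelow_range x) i
    have hxu : x i ≤ ⨆ i, x i := le_ciSup (Finite.bddAbove_range x) i
    obtain ⟨hβ0, hβ1⟩ := hβ
    rw [hy i]
    by_cases hi : i = p
    · subst hi
      -- `y p = (1 - β p) x p + β p t + c`
      simp only [if_true, mul_one]
      constructor <;> nlinarith [ht.1, ht.2]
    · simp only [hi, if_false, mul_zero, zero_mul]
      constructor <;> linarith
  calc pspan y ≤ (((⨆ i, x i) + β p + c) - ((⨅ i, x i) - β p + c)) / 2 :=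
        pspan_le_of_forall_mem_Icc hy_mem
    _ = pspan x + β p := by rw [pspan]; ring

end Span

section Visits

variable {S A : Type*} [DecidableEq S] [DecidableEq A] (sa : ℕ → S × A)

@[simp]
lemma visits_zero (q : S × A) : visits sa 0 q = 0 := by
  simp [visits]

lemma visits_succ (k : ℕ) (q : S × A) :
    visits sa (k + 1) q = visits sa k q + if sa (k + 1) = q then 1 else 0 := by
  simp only [visits, card_filter]
  exact sum_Icc_succ_top (by omega) _

variable [Fintype S] [Fintype A]

lemma sum_visits (k : ℕ) : ∑ q, visits sa k q = k := by
  induction k with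
  | zero => simp
  | succ k ih => simp [visits_succ, sum_add_distrib, ih]

lemma inv_visits_succ_self_add_le {h : ℝ} (hh : 0 < h) (k : ℕ) :
    ((visits sa (k + 1) (sa (k + 1)) : ℝ) + h)⁻¹ ≤
      ∑ q, log ((visits sa (k + 1) q + h) / h) - ∑ q, log ((visits sa k q + h) / h) := by
  rw [← sum_sub_distrib, sum_eq_single (sa (k + 1)) (fun q _ hq => by
    simp [visits_succ, Ne.symm hq]) (by simp)]
  have hpos : (0 : ℝ) < visits sa k (sa (k + 1)) + h := by positivity
  have := inv_add_one_le_log_add_one_sub_log hpos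
  rw [visits_succ, if_pos rfl, log_div (by positivity) hh.ne', log_div hpos.ne' hh.ne']
  push_cast
  rw [add_right_comm] at this
  linarith

lemma sum_log_visits_le [Nonempty S] [Nonempty A] {h : ℝ} (hh : 0 < h) (k : ℕ) :
    ∑ q, log ((visits sa k q + h) / h) ≤
      Fintype.card (S × A) * log ((k / Fintype.card (S × A) + h) / h) := by
  have hcard : (0 : ℝ) < Fintype.card (S × A) := by exact_mod_cast Fintype.card_pos
  have hsum : ∑ q, ((visits sa k q : ℝ) + h) / h = (k + Fintype.card (S × A) * h) / h := by
    rw [← sum_div, sum_add_distrib, ← Nat.cast_sum, sum_visits, sum_const, nsmul_eq_mul,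
      card_univ]
  have := sum_log_le_card_mul_log_average univ_nonempty
    (p := fun q => ((visits sa k q : ℝ) + h) / h) (fun q _ => by positivity)
  have hmean : ((k + Fintype.card (S × A) * h) / h) / Fintype.card (S × A) =
      (k / Fintype.card (S × A) + h) / h := by
    field_simp
  rwa [hsum, card_univ, hmean] at this

end Visits

lemma pspan_le_add_sum_log_visits {S A : Type*} [Fintype S] [Fintype A] [Nonempty S]
    [Nonempty A] [DecidableEq S] [DecidableEq A] {R : S × A → ℝ} (hR : ∀ q, |R q| ≤ 1)
    {sa : ℕ → S × A} {s' : ℕ → S} {c : ℕ → ℝ} {α h : ℝ} (hα : 0 ≤ α) (hh : 0 < h)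
    (hαh : α ≤ 1 + h) {Q : ℕ → S × A → ℝ}
    (hstep : ∀ k, 1 ≤ k → ∀ q : S × A,
      Q (k + 1) q = Q k q
        + (α / ((visits sa k q : ℝ) + h)) * (if q = sa k then (1 : ℝ) else 0) *
            (R (sa k) + (⨆ a' : A, Q k (s' k, a')) - Q k (sa k))
        + c k)
    (K : ℕ) :
    pspan (Q (K + 1)) ≤ pspan (Q 1) + α * ∑ q, log ((visits sa K q + h) / h) := by
  induction K with
  | zero => simp
  | succ K ih =>
    have hvisits : (1 : ℝ) ≤ visits sa (K + 1) (sa (K + 1)) := by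
      rw [visits_succ, if_pos rfl]
      exact_mod_cast Nat.le_add_left 1 _
    have hβ : α / ((visits sa (K + 1) (sa (K + 1)) : ℝ) + h) ∈ Set.Icc 0 1 :=
      ⟨by positivity, div_le_one_of_le₀ (by linarith) (by positivity)⟩
    have ht : R (sa (K + 1)) + ⨆ a', Q (K + 1) (s' (K + 1), a') ∈
        Set.Icc ((⨅ q, Q (K + 1) q) - 1) ((⨆ q, Q (K + 1) q) + 1) := by
      obtain ⟨hl, hu⟩ := ciSup_comp_mem_Icc (Q (K + 1)) (fun a' => (s' (K + 1), a'))
      obtain ⟨hRl, hRu⟩ := abs_le.mp (hR (sa (K + 1)))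
      constructor <;> linarith
    have hupdate := pspan_update_le (β := fun q => α / ((visits sa (K + 1) q : ℝ) + h))
      hβ ht (hstep (K + 1) (by omega))
    have hpotential := inv_visits_succ_self_add_le sa hh K
    have hweighted := mul_le_mul_of_nonneg_left hpotential hα
    rw [← div_eq_mul_inv] at hweighted
    linarith

/-- Logarithmic almost-sure growth bound for asynchronous Q-learning with adaptive
stepsizes `α_k(s,a) = α/(N_k(s,a) + h)`:
`p_span(Q_k) ≤ p_span(Q_1) + α·|S|·|A|·log((⌈(k-1)/(|S||A|)⌉ + h)/h)`. -/
theorem qlearning_log_growth {S A : Type*} [Fintype S] [Fintype A] [Nonempty S] [Nonempty A]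
    [DecidableEq S] [DecidableEq A]
    (R : S × A → ℝ) (hR : ∀ sa, |R sa| ≤ 1)
    (sa : ℕ → S × A) (s' : ℕ → S) (c : ℕ → ℝ)
    (α h : ℝ) (hα : 0 < α) (hh : 0 < h) (hαh : α ≤ 1 + h)
    (Q : ℕ → S × A → ℝ)
    (hstep : ∀ k, 1 ≤ k → ∀ q : S × A,
      Q (k + 1) q = Q k q
        + (α / ((visits sa k q : ℝ) + h)) * (if q = sa k then (1 : ℝ) else 0) *
            (R (sa k) + (⨆ a' : A, Q k (s' k, a')) - Q k (sa k))
        + c k) :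
    ∀ k, 1 ≤ k →
      pspan (Q k) ≤ pspan (Q 1)
        + α * (Fintype.card S : ℝ) * (Fintype.card A : ℝ) *
            Real.log
              (((((⌈((k : ℝ) - 1) / ((Fintype.card S : ℝ) * (Fintype.card A : ℝ))⌉ : ℤ) : ℝ))
                  + h) / h) := by
  intro k hk
  obtain ⟨K, rfl⟩ : ∃ K, k = K + 1 := ⟨k - 1, by omega⟩
  have hcard : (Fintype.card S : ℝ) * Fintype.card A = Fintype.card (S × A) := by
    simp [Fintype.card_prod]
  calc pspan (Q (K + 1))
      ≤ pspan (Q 1) + α * ∑ q, log ((visits sa K q + h) / h) :=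
        pspan_le_add_sum_log_visits hR hα.le hh hαh hstep K
    _ ≤ pspan (Q 1) + α * (Fintype.card (S × A) * log ((K / Fintype.card (S × A) + h) / h)) := by
        gcongr
        exact sum_log_visits_le sa hh K
    _ ≤ pspan (Q 1) + α * (Fintype.card (S × A) *
          log ((⌈(K : ℝ) / Fintype.card (S × A)⌉ + h) / h)) := by
        gcongr
        exact Int.le_ceil _
    _ = _ := by
        rw [← hcard, Nat.cast_add_one, add_sub_cancel_right]
        ring
end

section
/- Let P be a finite nonempty set with |P| = n, let m ≥ 0 be an integer, let (x_1, …, x_m) be any sequence of elements of P, and let h > 0. For each i define the running count N_i = Σ_{j=1}^i 1{x_j = x_i}. Then Σ_{i=1}^m 1/(N_i + h) ≤ n·Σ_{i=1}^{⌈m/n⌉} 1/(i + h) ≤ n·log((⌈m/n⌉ + h)/h). -/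
/-!
Group the indices by the value `p = x i`. On the fiber of `p`, of size `c_p`, the running
count takes each value `1, …, c_p` exactly once, so the left-hand side is `∑_p H(c_p)` with
`H(c) = ∑_{k=1}^c 1/(k+h)`. Since `H` has decreasing increments,
`H(c) ≤ H(M) + (c - M)/(M + h)`, and summing over `p` with `∑_p c_p = m ≤ n M`, `M = ⌈m/n⌉`,
gives `∑_p H(c_p) ≤ n H(M)`. Finally `1/(k+h) ≤ log(k+h) - log(k-1+h)` telescopes to
`H(M) ≤ log((M+h)/h)`.
-/

open Finset

section RunningCount

variable {α : Type*} [DecidableEq α]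

def runningCount (x : ℕ → α) (i : ℕ) : ℕ := #{j ∈ Icc 1 i | x j = x i}

theorem runningCount_strictMonoOn (x : ℕ → α) (p : α) :
    StrictMonoOn (runningCount x) {i | x i = p} := by
  intro i hi i' hi' hlt
  have hx : x i = x i' := hi.trans hi'.symm
  refine card_lt_card ((ssubset_iff_of_subset fun j hj => ?_).mpr ⟨i', ?_, fun hi'i => ?_⟩)
  · obtain ⟨hj, hxj⟩ := mem_filter.mp hj
    exact mem_filter.mpr ⟨Icc_subset_Icc_right hlt.le hj, hxj.trans hx⟩
  · exact mem_filter.mpr ⟨mem_Icc.mpr ⟨by omega, le_rfl⟩, rfl⟩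
  · have := (mem_Icc.mp (mem_filter.mp hi'i).1).2
    omega

theorem runningCount_mem_Icc (x : ℕ → α) {i m : ℕ} (hi : i ∈ Icc 1 m) :
    runningCount x i ∈ Icc 1 #{j ∈ Icc 1 m | x j = x i} := by
  obtain ⟨h1, hm⟩ := mem_Icc.mp hi
  refine mem_Icc.mpr ⟨card_pos.mpr ⟨i, by simp [h1]⟩, card_le_card ?_⟩
  exact filter_subset_filter _ (Icc_subset_Icc_right hm)

theorem sum_filter_runningCount {β : Type*} [AddCommMonoid β] (x : ℕ → α) (m : ℕ) (p : α)
    (f : ℕ → β) :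
    ∑ i ∈ Icc 1 m with x i = p, f (runningCount x i) =
      ∑ k ∈ Icc 1 #{i ∈ Icc 1 m | x i = p}, f k := by
  set S : Finset ℕ := {i ∈ Icc 1 m | x i = p}
  have hinj : Set.InjOn (runningCount x) S :=
    (runningCount_strictMonoOn x p).injOn.mono fun i hi => (mem_filter.mp hi).2
  have himage : S.image (runningCount x) = Icc 1 #S := by
    refine eq_of_subset_of_card_le (fun k hk => ?_) ?_
    · obtain ⟨i, hi, rfl⟩ := mem_image.mp hk
      obtain ⟨him, hxi⟩ := mem_filter.mp hi
      simpa [S, hxi] using runningCount_mem_Icc x him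
    · simp [card_image_of_injOn hinj]
  rw [← himage, sum_image hinj]

theorem sum_runningCount [Fintype α] {β : Type*} [AddCommMonoid β] (x : ℕ → α) (m : ℕ)
    (f : ℕ → β) :
    ∑ i ∈ Icc 1 m, f (runningCount x i) =
      ∑ p, ∑ k ∈ Icc 1 #{i ∈ Icc 1 m | x i = p}, f k := by
  simp only [← sum_filter_runningCount, sum_fiberwise]

end RunningCount

namespace Antitone

variable {a : ℕ → ℝ}

theorem sum_Icc_le_add (ha : Antitone a) (c M : ℕ) :
    ∑ k ∈ Icc 1 c, a k ≤ ∑ k ∈ Icc 1 M, a k + (c - M : ℝ) * a M := by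
  have hIoc (k : ℕ) : Icc 1 k = Ioc 0 k := Icc_add_one_left_eq_Ioc 0 k
  rw [hIoc, hIoc]
  rcases le_total M c with hMc | hcM
  · have htail : ∑ k ∈ Ioc M c, a k ≤ (c - M : ℝ) * a M := by
      have := sum_le_card_nsmul (Ioc M c) a (a M) fun k hk => ha (mem_Ioc.mp hk).1.le
      simpa [Nat.cast_sub hMc] using this
    rw [← sum_Ioc_consecutive a M.zero_le hMc]
    linarith
  · have htail : (M - c : ℝ) * a M ≤ ∑ k ∈ Ioc c M, a k := by
      have := card_nsmul_le_sum (Ioc c M) a (a M) fun k hk => ha (mem_Ioc.mp hk).2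
      simpa [Nat.cast_sub hcM] using this
    rw [← sum_Ioc_consecutive a c.zero_le hcM]
    linarith

theorem sum_sum_Icc_le_card_mul {ι : Type*} (ha : Antitone a) (s : Finset ι) (c : ι → ℕ)
    {M : ℕ} (hc : ∑ i ∈ s, c i ≤ #s * M) (haM : 0 ≤ a M) :
    ∑ i ∈ s, ∑ k ∈ Icc 1 (c i), a k ≤ #s * ∑ k ∈ Icc 1 M, a k := by
  have hc' : (∑ i ∈ s, c i : ℝ) ≤ #s * M := by exact_mod_cast hc
  calc ∑ i ∈ s, ∑ k ∈ Icc 1 (c i), a k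
      ≤ ∑ i ∈ s, (∑ k ∈ Icc 1 M, a k + (c i - M : ℝ) * a M) :=
        sum_le_sum fun i _ => ha.sum_Icc_le_add (c i) M
    _ = #s * ∑ k ∈ Icc 1 M, a k + ((∑ i ∈ s, c i : ℝ) - #s * M) * a M := by
        simp only [sum_add_distrib, ← sum_mul, sum_sub_distrib, sum_const, nsmul_eq_mul]
    _ ≤ #s * ∑ k ∈ Icc 1 M, a k := by nlinarith

end Antitone

theorem one_div_add_one_le_log_div {y : ℝ} (hy : 0 < y) :
    1 / (y + 1) ≤ Real.log ((y + 1) / y) := by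
  have := Real.one_sub_inv_le_log_of_pos (show 0 < (y + 1) / y by positivity)
  convert this using 1
  field_simp
  ring

theorem sum_Icc_one_div_add_le_log {h : ℝ} (hh : 0 < h) (M : ℕ) :
    ∑ k ∈ Icc 1 M, 1 / ((k : ℝ) + h) ≤ Real.log ((M + h) / h) := by
  induction M with
  | zero => simp [hh.ne']
  | succ M ih =>
    have hM : 0 < (M : ℝ) + h := by positivity
    have hsplit : Real.log ((↑(M + 1) + h) / h) =
        Real.log ((M + h) / h) + Real.log ((M + h + 1) / (M + h)) := by
      rw [← Real.log_mul (by positivity) (by positivity)]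
      congr 1
      field_simp
      push_cast
      ring
    rw [sum_Icc_succ_top (by omega), hsplit,
      show ((M + 1 : ℕ) : ℝ) + h = M + h + 1 by push_cast; ring]
    linarith [one_div_add_one_le_log_div hM]

theorem le_mul_ceil_div {m n : ℕ} (hn : 0 < n) : m ≤ n * ⌈(m : ℝ) / n⌉.toNat := by
  rw [Int.ceil_toNat, mul_comm]
  exact_mod_cast (div_le_iff₀ (by positivity)).mp (Nat.le_ceil ((m : ℝ) / n))

theorem scheduling_harmonic_bound_general {P : Type*} [Fintype P] [DecidableEq P]
    (n : ℕ) (hn : Fintype.card P = n) (m : ℕ) (x : ℕ → P) (h : ℝ) (hh : 0 < h) :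
    (∑ i ∈ Finset.Icc 1 m,
        1 / ((((Finset.Icc 1 i).filter (fun j => x j = x i)).card : ℝ) + h))
      ≤ (n : ℝ) * ∑ i ∈ Finset.Icc 1 (⌈(m : ℝ) / (n : ℝ)⌉.toNat), 1 / ((i : ℝ) + h) ∧
    (n : ℝ) * (∑ i ∈ Finset.Icc 1 (⌈(m : ℝ) / (n : ℝ)⌉.toNat), 1 / ((i : ℝ) + h))
      ≤ (n : ℝ) * Real.log (((⌈(m : ℝ) / (n : ℝ)⌉.toNat : ℝ) + h) / h) := by
  set M := ⌈(m : ℝ) / n⌉.toNat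
  refine ⟨?_, mul_le_mul_of_nonneg_left (sum_Icc_one_div_add_le_log hh M) n.cast_nonneg⟩
  have hn0 : 0 < n := hn ▸ Fintype.card_pos_iff.mpr ⟨x 0⟩
  have hanti : Antitone fun k : ℕ => 1 / ((k : ℝ) + h) := fun k l hkl =>
    one_div_le_one_div_of_le (by positivity) (by gcongr)
  have hfibers : ∑ p, #{i ∈ Icc 1 m | x i = p} ≤ #(univ : Finset P) * M := by
    rw [sum_card_fiberwise_eq_card_filter, filter_true_of_mem fun _ _ => mem_univ _, card_univ,
      hn, Nat.card_Icc, Nat.add_sub_cancel]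
    exact le_mul_ceil_div hn0
  calc _ = ∑ p, ∑ k ∈ Icc 1 #{i ∈ Icc 1 m | x i = p}, 1 / ((k : ℝ) + h) :=
        sum_runningCount x m fun k => 1 / ((k : ℝ) + h)
    _ ≤ _ := hanti.sum_sum_Icc_le_card_mul univ _ hfibers (by positivity)
    _ = _ := by rw [card_univ, hn]

/-- Combinatorial scheduling bound: for any sequence `x_1, …, x_m` in a finite set `P`
of size `n`, with running counts `N_i = Σ_{j=1}^i 1{x_j = x_i}` and any `h > 0`,
`Σ_{i=1}^m 1/(N_i + h) ≤ n·Σ_{i=1}^{⌈m/n⌉} 1/(i + h) ≤ n·log((⌈m/n⌉ + h)/h)`. -/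
theorem scheduling_harmonic_bound {P : Type*} [Fintype P] [Nonempty P] [DecidableEq P]
    (n : ℕ) (hn : Fintype.card P = n) (m : ℕ) (x : ℕ → P) (h : ℝ) (hh : 0 < h) :
    (∑ i ∈ Finset.Icc 1 m,
        1 / ((((Finset.Icc 1 i).filter (fun j => x j = x i)).card : ℝ) + h))
      ≤ (n : ℝ) * ∑ i ∈ Finset.Icc 1 (⌈(m : ℝ) / (n : ℝ)⌉.toNat), 1 / ((i : ℝ) + h) ∧
    (n : ℝ) * (∑ i ∈ Finset.Icc 1 (⌈(m : ℝ) / (n : ℝ)⌉.toNat), 1 / ((i : ℝ) + h))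
      ≤ (n : ℝ) * Real.log (((⌈(m : ℝ) / (n : ℝ)⌉.toNat : ℝ) + h) / h) :=
  scheduling_harmonic_bound_general n hn m x h hh
end

section
/- Let (Ω, 𝔽, ℙ) be a probability space and let X_1, X_2, … be {0,1}-valued random variables. Suppose there are constants C ≥ 1, ρ ∈ (0,1), and D ∈ (0,1] such that (i) |𝔼[X_i] − D| ≤ 2·C·ρ^{i−1} for all i ≥ 1, and (ii) 𝔼[X_i·X_j] ≤ 𝔼[X_i]·𝔼[X_j] + 4·C·ρ^{j−i−1}·𝔼[X_i] for all 1 ≤ i < j. Then for every integer k ≥ 22·C/((1 − ρ)·D), 𝔼[((1/k)·Σ_{i=1}^k X_i − D)²] ≤ 10·C·D/((1 − ρ)·k). -/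
/-!
With `S = ∑_{i=1}^k X_i`, the mean-square error splits as `Var S / k² + (𝔼 S / k - D)²`.
Since `0 ≤ X_i ≤ 1` gives `Var X_i ≤ 𝔼 X_i`, summing the geometrically decaying covariance
bound over all pairs gives `Var S ≤ (1 + 8C/(1-ρ)) 𝔼 S`, and summing the bias bound gives
`|𝔼 S - kD| ≤ 2C/(1-ρ)`. For `k ≥ 22C/((1-ρ)D)` the bias term is dominated by the variance
term, and together they are at most `10CD/((1-ρ)k)`.
-/

open MeasureTheory Finset

theorem sum_pow_le_inv_one_sub_of_injOn {ι : Type*} {ρ : ℝ} (hρ0 : 0 ≤ ρ) (hρ1 : ρ < 1)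
    {s : Finset ι} {f : ι → ℕ} (hf : Set.InjOn f s) :
    ∑ j ∈ s, ρ ^ f j ≤ (1 - ρ)⁻¹ := by
  rw [← sum_image hf, ← tsum_geometric_of_lt_one hρ0 hρ1]
  exact (summable_geometric_of_lt_one hρ0 hρ1).sum_le_tsum _ fun n _ => pow_nonneg hρ0 n

theorem sum_sum_le_of_geometric_decay {s : Finset ℕ} {v : ℕ → ℕ → ℝ} {m : ℕ → ℝ} {K ρ : ℝ}
    (hK : 0 ≤ K) (hρ0 : 0 ≤ ρ) (hρ1 : ρ < 1) (hm : ∀ i ∈ s, 0 ≤ m i)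
    (hsymm : ∀ i j, v i j = v j i) (hdiag : ∀ i ∈ s, v i i ≤ m i)
    (hoff : ∀ i ∈ s, ∀ j ∈ s, i < j → v i j ≤ K * ρ ^ (j - i - 1) * m i) :
    ∑ i ∈ s, ∑ j ∈ s, v i j ≤ (1 + 2 * K * (1 - ρ)⁻¹) * ∑ i ∈ s, m i := by
  have hrow : ∀ i ∈ s, ∑ j ∈ s with i < j, K * ρ ^ (j - i - 1) * m i ≤ K * (1 - ρ)⁻¹ * m i := by
    intro i hi
    rw [← sum_mul, ← mul_sum]
    gcongr
    · exact hm i hi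
    · refine sum_pow_le_inv_one_sub_of_injOn hρ0 hρ1 fun a ha b hb hab => ?_
      simp only [coe_filter, Set.mem_ofPred_eq] at ha hb
      omega
  have hpoint : ∀ i ∈ s, ∀ j ∈ s, v i j ≤ (if i = j then m i else 0) +
      (if i < j then K * ρ ^ (j - i - 1) * m i else 0) +
      (if j < i then K * ρ ^ (i - j - 1) * m j else 0) := by
    intro i hi j hj
    rcases lt_trichotomy i j with h | rfl | h
    · simpa [h, h.ne, h.not_gt] using hoff i hi j hj h
    · simpa using hdiag i hi
    · simpa [h, h.ne', h.not_gt, hsymm i j] using hoff j hj i hi h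
  calc ∑ i ∈ s, ∑ j ∈ s, v i j
      ≤ ∑ i ∈ s, ∑ j ∈ s, ((if i = j then m i else 0) +
          (if i < j then K * ρ ^ (j - i - 1) * m i else 0) +
          (if j < i then K * ρ ^ (i - j - 1) * m j else 0)) :=
        sum_le_sum fun i hi => sum_le_sum fun j hj => hpoint i hi j hj
    _ = ∑ i ∈ s, m i + 2 * ∑ i ∈ s, ∑ j ∈ s with i < j, K * ρ ^ (j - i - 1) * m i := by
        simp only [sum_add_distrib]
        rw [sum_comm (f := fun i j => if j < i then K * ρ ^ (i - j - 1) * m j else 0)]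
        simp only [sum_ite_eq, ← sum_filter]
        rw [filter_true_of_mem fun i hi => hi]
        ring
    _ ≤ ∑ i ∈ s, m i + 2 * ∑ i ∈ s, K * (1 - ρ)⁻¹ * m i := by
        gcongr with i hi
        exact hrow i hi
    _ = (1 + 2 * K * (1 - ρ)⁻¹) * ∑ i ∈ s, m i := by
        rw [← mul_sum]; ring

theorem abs_sum_Icc_sub_le_of_geometric_bias {m : ℕ → ℝ} {B D ρ : ℝ} (hB : 0 ≤ B)
    (hρ0 : 0 ≤ ρ) (hρ1 : ρ < 1) (hbias : ∀ i, 1 ≤ i → |m i - D| ≤ B * ρ ^ (i - 1)) (k : ℕ) :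
    |∑ i ∈ Icc 1 k, m i - k * D| ≤ B * (1 - ρ)⁻¹ :=
  calc |∑ i ∈ Icc 1 k, m i - k * D| = |∑ i ∈ Icc 1 k, (m i - D)| := by
        simp [sum_sub_distrib]
    _ ≤ ∑ i ∈ Icc 1 k, B * ρ ^ (i - 1) :=
        (abs_sum_le_sum_abs _ _).trans <| sum_le_sum fun i hi => hbias i (mem_Icc.1 hi).1
    _ ≤ B * (1 - ρ)⁻¹ := by
        rw [← mul_sum]
        gcongr
        refine sum_pow_le_inv_one_sub_of_injOn hρ0 hρ1 fun a ha b hb hab => ?_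
        simp only [coe_Icc, Set.mem_Icc] at ha hb
        omega

section Moments

open ProbabilityTheory

variable {Ω : Type*} [MeasurableSpace Ω] {μ : Measure Ω} [IsProbabilityMeasure μ]

theorem integral_sub_const_sq {Y : Ω → ℝ} (hY : MemLp Y 2 μ) (c : ℝ) :
    ∫ ω, (Y ω - c) ^ 2 ∂μ = Var[Y; μ] + (μ[Y] - c) ^ 2 := by
  have hYc : MemLp (fun ω => Y ω - c) 2 μ := hY.sub (memLp_const c)
  rw [← variance_sub_const hY.aestronglyMeasurable c, variance_eq_sub hYc,
    integral_sub (hY.integrable one_le_two) (integrable_const c)]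
  simp

theorem variance_sum_le_of_covariance_le_geometric {X : ℕ → Ω → ℝ} {s : Finset ℕ} {K ρ : ℝ}
    (hK : 0 ≤ K) (hρ0 : 0 ≤ ρ) (hρ1 : ρ < 1) (hmeas : ∀ i ∈ s, AEMeasurable (X i) μ)
    (hX : ∀ i ∈ s, ∀ᵐ ω ∂μ, X i ω ∈ Set.Icc 0 1)
    (hcov : ∀ i ∈ s, ∀ j ∈ s, i < j → cov[X i, X j; μ] ≤ K * ρ ^ (j - i - 1) * μ[X i]) :
    Var[fun ω => ∑ i ∈ s, X i ω; μ] ≤ (1 + 2 * K * (1 - ρ)⁻¹) * ∑ i ∈ s, μ[X i] := by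
  have hL2 : ∀ i ∈ s, MemLp (X i) 2 μ := fun i hi =>
    memLp_of_bounded (hX i hi) (hmeas i hi).aestronglyMeasurable 2
  rw [variance_fun_sum' hL2]
  refine sum_sum_le_of_geometric_decay hK hρ0 hρ1
    (fun i hi => integral_nonneg_of_ae ((hX i hi).mono fun ω h => h.1))
    (fun i j => covariance_comm (X i) (X j)) (fun i hi => ?_) hcov
  rw [covariance_self (hmeas i hi)]
  calc Var[X i; μ] ≤ (1 - μ[X i]) * (μ[X i] - 0) := variance_le_sub_mul_sub (hX i hi) (hmeas i hi)
    _ ≤ μ[X i] := by nlinarith [sq_nonneg μ[X i]]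

end Moments

theorem mse_le_of_variance_le_of_bias_le {V M D b k : ℝ} (hk : 0 < k) (hb : 1 ≤ b)
    (hV : V ≤ (1 + 8 * b) * M) (hM : |M - k * D| ≤ 2 * b) (hkD : 22 * b ≤ k * D) :
    (1 / k) ^ 2 * V + (1 / k * M - D) ^ 2 ≤ 10 * b * D / k := by
  have hsplit : (1 / k) ^ 2 * V + (1 / k * M - D) ^ 2 = (V + (M - k * D) ^ 2) / k ^ 2 := by
    field_simp
  rw [hsplit]
  obtain ⟨hM1, hM2⟩ := abs_le.mp hM
  have hbias : (M - k * D) ^ 2 ≤ 4 * b ^ 2 := by nlinarith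
  have hvar : V ≤ 9 * b * (k * D + 2 * b) := by nlinarith
  calc (V + (M - k * D) ^ 2) / k ^ 2 ≤ 10 * b * D * k / k ^ 2 := by gcongr; nlinarith
    _ = 10 * b * D / k := by field_simp

theorem empirical_frequency_mse_general {Ω : Type*} [MeasurableSpace Ω]
    (ℙ : Measure Ω) [IsProbabilityMeasure ℙ]
    (X : ℕ → Ω → ℝ) (hmeas : ∀ i, Measurable (X i))
    (hval : ∀ i ω, X i ω = 0 ∨ X i ω = 1)
    (C ρ D : ℝ) (hC : 1 ≤ C) (hρ0 : 0 < ρ) (hρ1 : ρ < 1) (hD0 : 0 < D)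
    (hbias : ∀ i : ℕ, 1 ≤ i → |(∫ ω, X i ω ∂ℙ) - D| ≤ 2 * C * ρ ^ (i - 1))
    (hcov : ∀ i j : ℕ, 1 ≤ i → i < j →
      (∫ ω, X i ω * X j ω ∂ℙ) ≤
        (∫ ω, X i ω ∂ℙ) * (∫ ω, X j ω ∂ℙ) + 4 * C * ρ ^ (j - i - 1) * (∫ ω, X i ω ∂ℙ)) :
    ∀ k : ℕ, 22 * C / ((1 - ρ) * D) ≤ (k : ℝ) →
      (∫ ω, ((1 / (k : ℝ)) * (∑ i ∈ Finset.Icc 1 k, X i ω) - D) ^ 2 ∂ℙ)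
        ≤ 10 * C * D / ((1 - ρ) * (k : ℝ)) := by
  intro k hk
  have h1ρ : 0 < 1 - ρ := sub_pos.2 hρ1
  have hb : 1 ≤ C * (1 - ρ)⁻¹ := one_le_mul_of_one_le_of_one_le hC
    ((one_le_inv₀ h1ρ).2 (by linarith))
  have hkD : 22 * (C * (1 - ρ)⁻¹) ≤ k * D := by
    rw [div_le_iff₀ (by positivity)] at hk
    rw [← mul_assoc, ← div_eq_mul_inv, div_le_iff₀ h1ρ]
    linarith
  have hk0 : (0 : ℝ) < k := by nlinarith
  have hX01 : ∀ i, ∀ᵐ ω ∂ℙ, X i ω ∈ Set.Icc 0 1 := fun i =>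
    ae_of_all _ fun ω => by rcases hval i ω with h | h <;> simp [h]
  have hL2 : ∀ i, MemLp (X i) 2 ℙ := fun i =>
    memLp_of_bounded (hX01 i) (hmeas i).aestronglyMeasurable 2
  have hvar := variance_sum_le_of_covariance_le_geometric (s := Icc 1 k) (K := 4 * C)
    (by positivity) hρ0.le hρ1 (fun i _ => (hmeas i).aemeasurable) (fun i _ => hX01 i)
    fun i hi j _ hij => by
      rw [ProbabilityTheory.covariance_eq_sub (hL2 i) (hL2 j)]
      simp only [Pi.mul_apply]
      linarith [hcov i j (mem_Icc.1 hi).1 hij]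
  have hsum := abs_sum_Icc_sub_le_of_geometric_bias (by positivity) hρ0.le hρ1 hbias k
  rw [integral_sub_const_sq ((memLp_finsetSum _ fun i _ => hL2 i).const_mul _),
    ProbabilityTheory.variance_const_mul, integral_const_mul,
    integral_finsetSum _ fun i _ => (hL2 i).integrable one_le_two]
  calc _ ≤ 10 * (C * (1 - ρ)⁻¹) * D / k :=
        mse_le_of_variance_le_of_bias_le hk0 hb (hvar.trans_eq (by ring))
          (hsum.trans_eq (by ring)) hkD
    _ = 10 * C * D / ((1 - ρ) * k) := by field_simp

/-- Mean-square error bound for empirical frequencies of `{0,1}`-valued random variables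
with geometrically decaying bias and covariance (functions of a geometrically ergodic
Markov chain): for `k ≥ 22·C/((1-ρ)·D)`,
`𝔼[((1/k)·Σ_{i=1}^k X_i - D)²] ≤ 10·C·D/((1-ρ)·k)`. -/
theorem empirical_frequency_mse {Ω : Type*} [MeasurableSpace Ω]
    (ℙ : Measure Ω) [IsProbabilityMeasure ℙ]
    (X : ℕ → Ω → ℝ) (hmeas : ∀ i, Measurable (X i))
    (hval : ∀ i ω, X i ω = 0 ∨ X i ω = 1)
    (C ρ D : ℝ) (hC : 1 ≤ C) (hρ0 : 0 < ρ) (hρ1 : ρ < 1) (hD0 : 0 < D) (hD1 : D ≤ 1)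
    (hbias : ∀ i : ℕ, 1 ≤ i → |(∫ ω, X i ω ∂ℙ) - D| ≤ 2 * C * ρ ^ (i - 1))
    (hcov : ∀ i j : ℕ, 1 ≤ i → i < j →
      (∫ ω, X i ω * X j ω ∂ℙ) ≤
        (∫ ω, X i ω ∂ℙ) * (∫ ω, X j ω ∂ℙ) + 4 * C * ρ ^ (j - i - 1) * (∫ ω, X i ω ∂ℙ)) :
    ∀ k : ℕ, 22 * C / ((1 - ρ) * D) ≤ (k : ℝ) →
      (∫ ω, ((1 / (k : ℝ)) * (∑ i ∈ Finset.Icc 1 k, X i ω) - D) ^ 2 ∂ℙ)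
        ≤ 10 * C * D / ((1 - ρ) * (k : ℝ)) :=
  empirical_frequency_mse_general ℙ X hmeas hval C ρ D hC hρ0 hρ1 hD0 hbias hcov
end
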